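/- arXiv:1911.08702 — 4 statements merged into one kernel-verified Lean document; each statement's English description precedes it below -/
import Mathlib

section
/- Euler's identity: ∏_{m=1}^{∞} (1 + q^{2m-1}) = 1 + ∑_{l=1}^{∞} q^{l^2} / ∏_{j=1}^{l} (1 - q^{2j}) holds as formal power series in q. -/
/-! With `[N, l]_q = qBinomial q N l`, the finite `q`-binomial theorem
`∏_{m<N} (1 + q^m x) = ∑_l [N, l]_q q^(l choose 2) x^l` at `q = X²`, `x = X` writes the
truncated product as `∑_l [N, l]_{X²} X^(l²)`. Since
`[k + l, l]_q = ∏_{j<l} (1 - q^(k+j+1)) / ∏_{j<l} (1 - q^(j+1))`, it agrees with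
`1 / ∏_{j<l} (1 - q^(j+1))` modulo `q^(k+1)`; for `N = n + 1 = k + l` the discrepancy in the
`l`-th summand is divisible by `X^(l² + 2(k+1))` and so does not reach the coefficient of `X^n`. -/

open PowerSeries Finset

section QBinomial

variable {R : Type*} [CommRing R]

def qBinomial (q : R) : ℕ → ℕ → R
  | _, 0 => 1
  | 0, _ + 1 => 0
  | N + 1, l + 1 => qBinomial q N (l + 1) + q ^ (N - l) * qBinomial q N l

variable (q : R)

@[simp]
lemma qBinomial_zero_right (N : ℕ) : qBinomial q N 0 = 1 := by
  cases N <;> rfl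

@[simp]
lemma qBinomial_zero_succ (l : ℕ) : qBinomial q 0 (l + 1) = 0 := rfl

lemma qBinomial_succ_succ (N l : ℕ) :
    qBinomial q (N + 1) (l + 1) = qBinomial q N (l + 1) + q ^ (N - l) * qBinomial q N l := rfl

lemma qBinomial_eq_zero_of_lt {N l : ℕ} (h : N < l) : qBinomial q N l = 0 := by
  induction N generalizing l with
  | zero => obtain ⟨l, rfl⟩ := Nat.exists_eq_add_of_lt h; simp
  | succ N ih =>
    obtain ⟨l, rfl⟩ := Nat.exists_eq_add_of_lt (Nat.zero_lt_of_lt h)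
    rw [qBinomial_succ_succ, ih (by omega), ih (by omega), mul_zero, add_zero]

@[simp]
lemma qBinomial_self (N : ℕ) : qBinomial q N N = 1 := by
  induction N with
  | zero => rfl
  | succ N ih => rw [qBinomial_succ_succ, qBinomial_eq_zero_of_lt q N.lt_succ_self, ih]; simp

theorem prod_one_add_pow_mul_eq_sum_qBinomial (x : R) (N : ℕ) :
    ∏ m ∈ range N, (1 + q ^ m * x) =
      ∑ l ∈ range (N + 1), qBinomial q N l * q ^ l.choose 2 * x ^ l := by
  induction N with
  | zero => simp
  | succ N ih =>
    set f : ℕ → R := fun l ↦ qBinomial q N l * q ^ l.choose 2 * x ^ l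
    have hshift : ∑ l ∈ range (N + 1), f (l + 1) + f 0 = ∑ l ∈ range (N + 1), f l := by
      rw [← sum_range_succ' f, sum_range_succ]
      simp [f, qBinomial_eq_zero_of_lt q N.lt_succ_self]
    have hpascal : ∀ l ∈ range (N + 1),
        qBinomial q (N + 1) (l + 1) * q ^ (l + 1).choose 2 * x ^ (l + 1) =
          f (l + 1) + f l * (q ^ N * x) := by
      intro l hl
      have hexp : N - l + (l + 1).choose 2 = l.choose 2 + N := by
        have hc : (l + 1).choose 2 = l + l.choose 2 := by
          rw [Nat.choose_succ_succ', Nat.choose_one_right]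
        have := mem_range.1 hl
        omega
      have e : q ^ (N - l) * q ^ (l + 1).choose 2 = q ^ l.choose 2 * q ^ N := by
        rw [← pow_add, ← pow_add, hexp]
      simp only [f, qBinomial_succ_succ]
      linear_combination (qBinomial q N l * x ^ (l + 1)) * e
    rw [prod_range_succ, ih, sum_range_succ' _ (N + 1), sum_congr rfl hpascal, sum_add_distrib,
      ← sum_mul, ← hshift]
    simp [f]
    ring

theorem qBinomial_mul_prod_one_sub_pow (k l : ℕ) :
    qBinomial q (k + l) l * ∏ j ∈ range l, (1 - q ^ (j + 1)) =
      ∏ j ∈ range l, (1 - q ^ (k + j + 1)) := by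
  induction k generalizing l with
  | zero => simp
  | succ k ihk =>
    induction l with
    | zero => simp
    | succ l ihl =>
      have hshift : ∏ j ∈ range (l + 1), (1 - q ^ (k + j + 1)) =
          (∏ j ∈ range l, (1 - q ^ (k + 1 + j + 1))) * (1 - q ^ (k + 1)) := by
        rw [prod_range_succ']
        simp only [add_assoc, add_comm 1]
      have hk := ihk (l + 1)
      rw [hshift, show k + (l + 1) = k + 1 + l by omega, prod_range_succ] at hk
      rw [show k + 1 + (l + 1) = k + 1 + l + 1 by omega, qBinomial_succ_succ,
        show k + 1 + l - l = k + 1 by omega, prod_range_succ _ l, prod_range_succ _ l]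
      linear_combination hk + q ^ (k + 1) * (1 - q ^ (l + 1)) * ihl

lemma pow_dvd_prod_one_sub_pow_sub_one (k l : ℕ) :
    q ^ (k + 1) ∣ ∏ j ∈ range l, (1 - q ^ (k + j + 1)) - 1 := by
  induction l with
  | zero => simp
  | succ l ih =>
    rw [prod_range_succ, mul_one_sub, sub_right_comm]
    exact dvd_sub ih (dvd_mul_of_dvd_right (pow_dvd_pow q (by omega)) _)

end QBinomial

lemma two_mul_choose_two_add_self (l : ℕ) : 2 * l.choose 2 + l = l ^ 2 := by
  induction l with
  | zero => rfl
  | succ l ih => rw [Nat.choose_succ_succ', Nat.choose_one_right]; nlinarith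

section PowerSeries

variable {K : Type*} [Field K]

theorem pow_dvd_qBinomial_sub_inv_prod {q : K⟦X⟧} (hq : constantCoeff q = 0) (k l : ℕ) :
    q ^ (k + 1) ∣ qBinomial q (k + l) l - (∏ j ∈ range l, (1 - q ^ (j + 1)))⁻¹ := by
  have hD : constantCoeff (∏ j ∈ range l, (1 - q ^ (j + 1))) ≠ 0 := by simp [hq]
  have hG : qBinomial q (k + l) l = (∏ j ∈ range l, (1 - q ^ (k + j + 1))) *
      (∏ j ∈ range l, (1 - q ^ (j + 1)))⁻¹ :=
    (eq_mul_inv_iff_mul_eq hD).2 (qBinomial_mul_prod_one_sub_pow q k l)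
  rw [hG, ← sub_one_mul]
  exact dvd_mul_of_dvd_left (pow_dvd_prod_one_sub_pow_sub_one q k l) _

theorem coeff_X_pow_sq_mul_qBinomial {n l : ℕ} (hl : l ≤ n + 1) :
    coeff n (X ^ (l ^ 2) * qBinomial (X ^ 2 : K⟦X⟧) (n + 1) l) =
      coeff n (X ^ (l ^ 2) * (∏ j ∈ range l, (1 - (X ^ 2 : K⟦X⟧) ^ (j + 1)))⁻¹) := by
  obtain ⟨k, hk⟩ : ∃ k, n + 1 = k + l := ⟨n + 1 - l, by omega⟩
  have hdvd : (X : K⟦X⟧) ^ (l ^ 2 + 2 * (k + 1)) ∣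
      X ^ (l ^ 2) * qBinomial (X ^ 2) (n + 1) l -
        X ^ (l ^ 2) * (∏ j ∈ range l, (1 - (X ^ 2 : K⟦X⟧) ^ (j + 1)))⁻¹ := by
    rw [← mul_sub, pow_add, pow_mul, hk]
    exact mul_dvd_mul_left _ (pow_dvd_qBinomial_sub_inv_prod (by simp) k l)
  have hn : n < l ^ 2 + 2 * (k + 1) := by nlinarith
  rw [← sub_eq_zero, ← map_sub]
  exact X_pow_dvd_iff.1 hdvd n hn

end PowerSeries

/-- Euler's identity:
`∏_{m=1}^∞ (1 + q^{2m-1}) = 1 + ∑_{l=1}^∞ q^{l²} / ∏_{j=1}^{l} (1-q^{2j})`,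
stated coefficientwise (truncating the product and the sum, which does not affect
the coefficient of `q^n`). -/
theorem euler_identity :
    ∀ n : ℕ,
      (PowerSeries.coeff (R := ℚ) n) (∏ m ∈ Finset.range (n + 1), (1 + (X : PowerSeries ℚ) ^ (2 * m + 1))) =
      (PowerSeries.coeff (R := ℚ) n) (1 + ∑ l ∈ Finset.range (n + 1),
        ((X : PowerSeries ℚ) ^ ((l + 1) ^ 2) *
          (∏ j ∈ Finset.range (l + 1), (1 - (X : PowerSeries ℚ) ^ (2 * (j + 1))))⁻¹)) := by
  intro n
  have hprod : ∏ m ∈ range (n + 1), (1 + (X : ℚ⟦X⟧) ^ (2 * m + 1)) =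
      ∑ l ∈ range (n + 2), X ^ (l ^ 2) * qBinomial (X ^ 2 : ℚ⟦X⟧) (n + 1) l := by
    have hfactor : ∀ m : ℕ, (X : ℚ⟦X⟧) ^ (2 * m + 1) = (X ^ 2) ^ m * X := fun m ↦ by
      rw [pow_succ, pow_mul]
    simp only [hfactor]
    rw [prod_one_add_pow_mul_eq_sum_qBinomial]
    refine sum_congr rfl fun l _ ↦ ?_
    rw [← pow_mul, mul_assoc, ← pow_add, two_mul_choose_two_add_self, mul_comm]
  have hsum : 1 + ∑ l ∈ range (n + 1), (X : ℚ⟦X⟧) ^ ((l + 1) ^ 2) *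
      (∏ j ∈ range (l + 1), (1 - (X : ℚ⟦X⟧) ^ (2 * (j + 1))))⁻¹ =
      ∑ l ∈ range (n + 2), X ^ (l ^ 2) * (∏ j ∈ range l, (1 - (X ^ 2 : ℚ⟦X⟧) ^ (j + 1)))⁻¹ := by
    simp [sum_range_succ' _ (n + 1), pow_mul, add_comm]
  rw [hprod, hsum, map_sum, map_sum]
  exact sum_congr rfl fun l hl ↦ coeff_X_pow_sq_mul_qBinomial (by simpa [Nat.lt_succ_iff] using hl)
end

section
/- With δ and δ* defined as above on partitions of n with distinct parts, δ* ∘ δ* = 0. -/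
/-- A partition of `n` with distinct parts: a strictly decreasing list of positive
integers summing to `n`. -/
def IsDistinctPartition (n : ℕ) (σ : List ℕ) : Prop :=
  σ.Pairwise (· > ·) ∧ (∀ x ∈ σ, 0 < x) ∧ σ.sum = n

/-- `mval σ` is `m(σ)`: the maximal `m` such that `n_j = n_{j-1} - 1` for all
`2 ≤ j ≤ m`. -/
def mval : List ℕ → ℕ
  | [] => 0
  | [_] => 1
  | a :: b :: t => if b = a - 1 then mval (b :: t) + 1 else 1

/-- The coboundary map `δ`: if `m(σ) < ℓ` then `δσ = 0` when `m(σ) ≥ n_ℓ`, and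
`δσ = (n_1-1, …, n_{m(σ)}-1, n_{m(σ)+1}, …, n_ℓ, m(σ))` when `m(σ) < n_ℓ`;
if `m(σ) = ℓ` then `δσ = 0` when `m(σ) ≥ n_ℓ - 1` and
`δσ = (n_1-1, …, n_ℓ-1, m(σ))` when `m(σ) < n_ℓ - 1`.  The zero vector is
represented by `none`. -/
def deltaS (σ : List ℕ) : Option (List ℕ) :=
  if σ = [] then none
  else
    let m := mval σ
    if (m < σ.length ∧ m < σ.getLast! ) ∨ (m = σ.length ∧ m < σ.getLast! - 1) then
      some ((σ.take m).map (· - 1) ++ σ.drop m ++ [m])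
    else none

/-- The adjoint map `δ*`: when (`m(σ) < ℓ` and `m(σ) ≥ n_ℓ`) or (`m(σ) = ℓ` and
`m(σ) > n_ℓ`), `δ*σ = (n_1+1, …, n_{n_ℓ}+1, n_{n_ℓ+1}, …, n_{ℓ-1})` (add 1 to the
first `n_ℓ` parts and delete the last part); otherwise `δ*σ = 0` (`none`). -/
def deltaStarS (σ : List ℕ) : Option (List ℕ) :=
  if σ = [] then none
  else
    let m := mval σ
    let nl := σ.getLast!
    if (m < σ.length ∧ nl ≤ m) ∨ (m = σ.length ∧ nl < m) then
      some ((σ.dropLast.take nl).map (· + 1) ++ σ.dropLast.drop nl)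
    else none

/-!
If `δ* σ = τ` with `σ = (n_1 > ⋯ > n_ℓ)` and `ν = n_ℓ`, then `ν < ℓ` and `τ` is `σ` with its last
part deleted and `1` added to its first `ν` parts. From position `ν` to `ν + 1` the parts of `τ`
drop from `n_ν + 1` to `n_{ν+1} < n_ν`, so `m(τ) ≤ ν` (trivially so if `τ` has only `ν` parts);
every part of `τ` is at least some `n_j` with `j < ℓ`, so it exceeds `ν`.
Hence `m(τ)` is smaller than the last part of `τ`, and `δ* τ = 0`.
-/

lemma List.getLast!_eq_getLast {α : Type*} [Inhabited α] {l : List α} (h : l ≠ []) :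
    l.getLast! = l.getLast h :=
  List.getLast!_of_getLast? (List.getLast?_eq_some_getLast h)

lemma mval_le_length : ∀ l : List ℕ, mval l ≤ l.length
  | [] => le_rfl
  | [_] => le_rfl
  | a :: b :: t => by
    have := mval_le_length (b :: t)
    simp only [mval, List.length_cons] at this ⊢
    split <;> omega

lemma mval_cons_le (a : ℕ) : ∀ l : List ℕ, mval (a :: l) ≤ mval l + 1
  | [] => le_rfl
  | b :: t => by
    rw [mval]
    split <;> omega

lemma mval_append_cons_cons_le {a b : ℕ} (hab : b ≠ a - 1) (t : List ℕ) :
    ∀ l : List ℕ, mval (l ++ a :: b :: t) ≤ l.length + 1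
  | [] => by simp [mval, hab]
  | c :: l => (mval_cons_le c _).trans (by simpa using mval_append_cons_cons_le hab t l)

def succFirst (k : ℕ) (l : List ℕ) : List ℕ :=
  (l.take k).map (· + 1) ++ l.drop k

lemma deltaStarS_eq_none_of_mval_lt_getLast {τ : List ℕ} (h : mval τ < τ.getLast!) :
    deltaStarS τ = none := by
  dsimp only [deltaStarS]
  split_ifs
  · rfl
  · omega
  · rfl

lemma of_deltaStarS_eq_some {σ τ : List ℕ} (h : deltaStarS σ = some τ) :
    σ.getLast! < σ.length ∧ τ = succFirst σ.getLast! σ.dropLast := by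
  have := mval_le_length σ
  dsimp only [deltaStarS] at h
  split_ifs at h
  exact ⟨by omega, (Option.some_inj.mp h).symm⟩

lemma mval_succFirst_le {k : ℕ} {l : List ℕ} (hl : l.Pairwise (· > ·)) (hk : 0 < k)
    (hkl : k ≤ l.length) : mval (succFirst k l) ≤ k := by
  rcases hdrop : l.drop k with _ | ⟨b, t⟩
  · calc mval (succFirst k l) ≤ (succFirst k l).length := mval_le_length _
      _ = k := by simp [succFirst, hdrop]; omega
  · obtain ⟨p, a, hpa⟩ : ∃ p a, l.take k = p ++ [a] :=
      ⟨_, _, (List.dropLast_append_getLast (List.ne_nil_of_length_pos (by simp; omega))).symm⟩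
    have hba : b < a := by
      have hsplit := List.take_append_drop k l
      rw [hpa, hdrop] at hsplit
      rw [← hsplit] at hl
      exact (List.pairwise_append.mp hl).2.2 a (by simp) b (by simp)
    have hlen : p.length + 1 = k := by
      simpa [hkl] using (congrArg List.length hpa).symm
    calc mval (succFirst k l) = mval (p.map (· + 1) ++ (a + 1) :: b :: t) := by
          simp [succFirst, hpa, hdrop]
      _ ≤ (p.map (· + 1)).length + 1 := mval_append_cons_cons_le (by omega) t _
      _ = k := by simp [hlen]

lemma lt_of_mem_succFirst {c k : ℕ} {l : List ℕ} (hl : ∀ x ∈ l, c < x) :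
    ∀ x ∈ succFirst k l, c < x := by
  simp only [succFirst, List.mem_append, List.mem_map]
  rintro x (⟨y, hy, rfl⟩ | hx)
  · exact (hl y (List.mem_of_mem_take hy)).trans (Nat.lt_succ_self y)
  · exact hl x (List.mem_of_mem_drop hx)

/-- `δ* ∘ δ* = 0` on partitions of `n` with distinct parts. -/
theorem deltaStarS_sq_zero (n : ℕ) (σ : List ℕ) (hσ : IsDistinctPartition n σ) :
    ∀ τ, deltaStarS σ = some τ → deltaStarS τ = none := by
  intro τ hτ
  obtain ⟨hlast, rfl⟩ := of_deltaStarS_eq_some hτ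
  have hne : σ ≠ [] := by rintro rfl; simp at hlast
  have hσL : σ = σ.dropLast ++ [σ.getLast!] := by
    rw [List.getLast!_eq_getLast hne, List.dropLast_append_getLast]
  set ν := σ.getLast!
  set L := σ.dropLast
  obtain ⟨hdec, hpos, -⟩ := hσ
  rw [hσL] at hdec hpos hlast
  obtain ⟨hL, -, hLν⟩ := List.pairwise_append.mp hdec
  have hν : 0 < ν := hpos ν (by simp)
  have hνL : ν ≤ L.length := by simpa using hlast
  have hτne : succFirst ν L ≠ [] := List.ne_nil_of_length_pos (by simp [succFirst]; omega)
  apply deltaStarS_eq_none_of_mval_lt_getLast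
  calc mval (succFirst ν L) ≤ ν := mval_succFirst_le hL hν hνL
    _ < (succFirst ν L).getLast! :=
      lt_of_mem_succFirst (fun x hx => hLν x hx ν (by simp)) _ (by
        rw [List.getLast!_eq_getLast hτne]
        exact List.getLast_mem hτne)
end

section
/- For every positive integer n that is neither of the form l(3l-1)/2 nor l(3l+1)/2 for any positive integer l, the number of partitions of n into an even number of distinct parts equals the number of partitions of n into an odd number of distinct parts. -/
/-!
Weighting a partition into distinct parts by `(-1) ^ (number of parts)` and every other partition
by `0`, the generating function of the weighted counts is `∏ i ≥ 1, (1 - X ^ i)`. By Euler's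
pentagonal number theorem this product is `∑ k : ℤ, (-1) ^ k X ^ (k (3k - 1) / 2)`, so its
coefficient at any `n` that is not a generalized pentagonal number vanishes.
-/

open Finset PowerSeries PowerSeries.WithPiTopology

theorem exists_two_mul_eq_of_pentagonal_eq {n : ℕ} (hn : 0 < n) {k : ℤ} (hk : pentagonal k = n) :
    ∃ l : ℕ, 0 < l ∧ (2 * n = l * (3 * l - 1) ∨ 2 * n = l * (3 * l + 1)) := by
  have hpos := two_mul_natCast_pentagonal k
  have hneg := two_mul_natCast_pentagonal_neg (-k)
  rw [hk] at hpos
  rw [neg_neg, hk] at hneg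
  rcases lt_trichotomy k 0 with hk0 | rfl | hk0
  · obtain ⟨l, rfl⟩ : ∃ l : ℕ, k = -l := ⟨k.natAbs, by omega⟩
    refine ⟨l, by omega, Or.inr ?_⟩
    zify
    linear_combination hneg
  · omega
  · lift k to ℕ using hk0.le
    refine ⟨k, by omega, Or.inl ?_⟩
    zify [show 1 ≤ 3 * k by omega]
    linear_combination hpos

namespace Nat.Partition

variable (R : Type*) [CommRing R]

def distinctSign (_ c : ℕ) : R := if c = 1 then -1 else 0

variable {R} in
theorem toFinsupp_prod_distinctSign (s : Multiset ℕ) :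
    s.toFinsupp.prod (distinctSign R) = if s.Nodup then (-1) ^ Multiset.card s else 0 := by
  classical
  simp_rw [Finsupp.prod, Multiset.toFinsupp_support, Multiset.toFinsupp_apply, distinctSign,
    prod_ite_zero, prod_const, Multiset.mem_toFinset, ← Multiset.nodup_iff_count_eq_one]
  split_ifs with h
  · rw [Multiset.toFinset_card_of_nodup h]
  · rfl

theorem coeff_genFun_distinctSign (n : ℕ) :
    (genFun (distinctSign R)).coeff n =
      #{p : n.Partition | p.parts.Nodup ∧ Even (Multiset.card p.parts)} -
      #{p : n.Partition | p.parts.Nodup ∧ ¬ Even (Multiset.card p.parts)} := by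
  simp only [coeff_genFun, toFinsupp_prod_distinctSign]
  rw [← sum_filter, ← sum_filter_add_sum_filter_not _ fun p ↦ Even (Multiset.card p.parts),
    sum_congr rfl fun p hp ↦ (mem_filter.mp hp).2.neg_one_pow,
    sum_congr rfl fun p hp ↦ (Nat.not_even_iff_odd.mp (mem_filter.mp hp).2).neg_one_pow]
  simp [filter_filter, sub_eq_add_neg]

theorem hasProd_genFun_distinctSign [TopologicalSpace R] [T2Space R] :
    HasProd (fun i ↦ (1 - X ^ (i + 1) : R⟦X⟧)) (genFun (distinctSign R)) := by
  convert! hasProd_genFun (distinctSign R) using 1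
  ext1 i
  rw [tsum_eq_single 0 fun j hj ↦ by simp [distinctSign, hj]]
  simp [distinctSign, sub_eq_add_neg]

theorem genFun_distinctSign : genFun (distinctSign R) = pentagonalSeries R :=
  let _ : TopologicalSpace R := ⊥
  have _ : DiscreteTopology R := ⟨rfl⟩
  (hasProd_genFun_distinctSign R).unique (hasProd_one_sub_X_pow R)

end Nat.Partition

/-- If `n ≥ 1` is not a generalized pentagonal number (`n ≠ l(3l-1)/2` and
`n ≠ l(3l+1)/2` for every positive `l`, written as `2n ≠ l(3l∓1)`), then the number of
partitions of `n` into an even number of distinct parts equals the number of partitions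
of `n` into an odd number of distinct parts. -/
theorem distinct_partitions_balanced (n : ℕ) (hn : 0 < n)
    (h : ¬ ∃ l : ℕ, 0 < l ∧ (2 * n = l * (3 * l - 1) ∨ 2 * n = l * (3 * l + 1))) :
    (Finset.univ.filter fun p : n.Partition =>
        p.parts.Nodup ∧ Even (Multiset.card p.parts)).card =
    (Finset.univ.filter fun p : n.Partition =>
        p.parts.Nodup ∧ ¬ Even (Multiset.card p.parts)).card := by
  have hpent : n ∉ Set.range pentagonal :=
    fun ⟨k, hk⟩ ↦ h (exists_two_mul_eq_of_pentagonal_eq hn hk)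
  have hcoeff := congrArg (coeff n) (Nat.Partition.genFun_distinctSign ℤ)
  rw [Nat.Partition.coeff_genFun_distinctSign, coeff_pentagonalSeries_eq_zero ℤ hpent] at hcoeff
  omega
end

section
/- A partition σ of n satisfies δ(σ) = 0 and δ*(σ) = 0 (for the bosonic δ, δ*) if and only if σ has the form ((n_1)^{n_1+2s}, (n_2)^{2t_2}, ..., (n_k)^{2t_k}) with n_1 > n_2 > ... > n_k > 0, s ≥ 0, and t_2,...,t_k ≥ 1, i.e., the multiplicity of the largest part exceeds the largest part by a nonnegative even number and all other multiplicities are even. -/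
/-- A partition of `n` in multiplicity (block) notation: a list of blocks
`(nᵢ, mᵢ)` with strictly decreasing positive part sizes `nᵢ`, positive
multiplicities `mᵢ`, and `∑ nᵢ · mᵢ = n`. -/
def IsBlockPartition (n : ℕ) (σ : List (ℕ × ℕ)) : Prop :=
  (σ.map Prod.fst).Pairwise (· > ·) ∧ (∀ b ∈ σ, 0 < b.1 ∧ 0 < b.2) ∧
    (σ.map fun b => b.1 * b.2).sum = n

/-- The number of parts (the length) of a block partition. -/
def blockLength (σ : List (ℕ × ℕ)) : ℕ := (σ.map Prod.snd).sum

/-- Insert a single new part of size `p` into a block list, subject to the evenness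
conditions: all multiplicities of blocks at or to the right of the insertion point must
be even (when inserting at the very end there is no condition); returns `none` when the
condition fails. -/
def insertPart (p : ℕ) : List (ℕ × ℕ) → Option (List (ℕ × ℕ))
  | [] => some [(p, 1)]
  | (a, m) :: t =>
    if a < p then
      if ∀ b ∈ (a, m) :: t, Even b.2 then some ((p, 1) :: (a, m) :: t) else none
    else if a = p then
      if ∀ b ∈ (a, m) :: t, Even b.2 then some ((a, m + 1) :: t) else none
    else
      (insertPart p t).map fun t' => (a, m) :: t'

/-- Merge a block onto the front of a block list, combining blocks of equal part
size. -/
def mergeHead (b : ℕ × ℕ) : List (ℕ × ℕ) → List (ℕ × ℕ)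
  | [] => [b]
  | (a, m) :: t => if a = b.1 then (b.1, b.2 + m) :: t else b :: (a, m) :: t

/-- The bosonic coboundary map `δ` on ordinary partitions in block notation: split the
top block `(n₁)^{m₁}` into `(n₁-1)^{m₁}` and a new single part of size `m₁`, which is
inserted in its correct position (merging equal part sizes), provided `m₁ ≤ n₁ - 1` and
all multiplicities at or to the right of the insertion point are even; otherwise `δσ = 0`
(`none`). -/
def deltaB : List (ℕ × ℕ) → Option (List (ℕ × ℕ))
  | [] => none
  | (n1, m1) :: rest =>
    if n1 - 1 < m1 then none
    else (insertPart m1 rest).map (mergeHead (n1 - 1, m1))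

/-- Find the last block with odd multiplicity in a block list; if found at index
`t ≥ 1` (0-based: within this tail), return its part size `n_t` together with the list
in which its multiplicity has been decreased by one (omitting the block if it becomes
empty). -/
def removeLastOdd : List (ℕ × ℕ) → Option (ℕ × List (ℕ × ℕ))
  | [] => none
  | (a, m) :: t =>
    match removeLastOdd t with
    | some (nt, t') => some (nt, (a, m) :: t')
    | none => if ¬ Even m then some (a, if m = 1 then t else (a, m - 1) :: t) else none

/-- The bosonic map `δ*` on ordinary partitions in block notation.  Let `t` be the
maximal index with `m_t` odd (if any).  If `t = 1` or all multiplicities are even: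
`δ*σ = 0` unless `m₁ = n₁ + 2i + 1` for some `i ≥ 0`, in which case
`δ*σ = ((n₁+1)^{n₁}, (n₁)^{2i}, (n₂)^{m₂}, …)` (omitting empty blocks).  If `t ≥ 2`:
`δ*σ = 0` if `n_t > m₁`; otherwise
`δ*σ = ((n₁+1)^{n_t}, (n₁)^{m₁-n_t}, …, (n_t)^{m_t-1}, …)` (omitting empty blocks). -/
def deltaStarB : List (ℕ × ℕ) → Option (List (ℕ × ℕ))
  | [] => none
  | (n1, m1) :: rest =>
    match removeLastOdd rest with
    | some (nt, rest') =>
      if m1 < nt then none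
      else some ((n1 + 1, nt) ::
        (if m1 - nt = 0 then rest' else (n1, m1 - nt) :: rest'))
    | none =>
      if n1 < m1 ∧ ¬ Even (m1 - n1) then
        some ((n1 + 1, n1) ::
          (if m1 - n1 - 1 = 0 then rest else (n1, m1 - n1 - 1) :: rest))
      else none

/-!
Write `σ = ((n₁)^{m₁}, rest)`. If some multiplicity in `rest` is odd, let `n_t` be the last
such part. Then `δ*σ = 0` forces `m₁ < n_t < n₁`; every block of `rest` at or below `m₁` lies
below `n_t`, so it is even and the new part `m₁` can be inserted, whence `δσ ≠ 0`. So all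
multiplicities in `rest` are even, and then `δσ = 0` iff `n₁ ≤ m₁`, while `δ*σ = 0` iff
`m₁ - n₁` is not odd.
-/

section BlockLists

variable {l : List (ℕ × ℕ)}

lemma removeLastOdd_eq_none_iff : removeLastOdd l = none ↔ ∀ b ∈ l, Even b.2 := by
  induction l with
  | nil => simp [removeLastOdd]
  | cons b t ih =>
    obtain ⟨a, m⟩ := b
    cases hr : removeLastOdd t with
    | some p => simp_all [removeLastOdd]
    | none =>
      by_cases hm : Even m
      · simpa [removeLastOdd, hr, hm] using ih.mp hr
      · simp [removeLastOdd, hr, hm]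

lemma mem_map_fst_of_removeLastOdd_eq_some {nt : ℕ} {l' : List (ℕ × ℕ)}
    (h : removeLastOdd l = some (nt, l')) : nt ∈ l.map Prod.fst := by
  induction l generalizing l' with
  | nil => simp [removeLastOdd] at h
  | cons b t ih =>
    obtain ⟨a, m⟩ := b
    simp only [removeLastOdd] at h
    cases hr : removeLastOdd t with
    | some p =>
      rw [hr] at h
      obtain ⟨rfl, -⟩ := Prod.mk.inj (Option.some.inj h)
      exact List.mem_cons_of_mem _ (ih hr)
    | none =>
      rw [hr] at h
      by_cases hm : Even m <;> simp_all

lemma even_of_removeLastOdd_eq_some (hl : (l.map Prod.fst).Pairwise (· > ·)) {nt : ℕ}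
    {l' : List (ℕ × ℕ)} (h : removeLastOdd l = some (nt, l')) :
    ∀ b ∈ l, b.1 < nt → Even b.2 := by
  induction l generalizing l' with
  | nil => simp [removeLastOdd] at h
  | cons b t ih =>
    obtain ⟨a, m⟩ := b
    simp only [List.map_cons, List.pairwise_cons] at hl
    simp only [removeLastOdd] at h
    cases hr : removeLastOdd t with
    | some p =>
      obtain ⟨nt', t'⟩ := p
      rw [hr] at h
      obtain ⟨rfl, -⟩ := Prod.mk.inj (Option.some.inj h)
      have hnt : nt' < a := hl.1 _ (mem_map_fst_of_removeLastOdd_eq_some hr)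
      rintro b (_ | ⟨_, hb⟩) hlt
      · exact (lt_asymm hnt hlt).elim
      · exact ih hl.2 hr b hb hlt
    | none =>
      rw [hr] at h
      by_cases hm : Even m
      · simp [hm] at h
      · obtain ⟨rfl, -⟩ := Prod.mk.inj (Option.some.inj (by simpa [hm] using h))
        rintro b (_ | ⟨_, hb⟩) hlt
        · exact (lt_irrefl _ hlt).elim
        · exact removeLastOdd_eq_none_iff.mp hr b hb

lemma insertPart_ne_none (hl : (l.map Prod.fst).Pairwise (· > ·)) {p : ℕ}
    (h : ∀ b ∈ l, b.1 ≤ p → Even b.2) : insertPart p l ≠ none := by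
  induction l with
  | nil => simp [insertPart]
  | cons b t ih =>
    obtain ⟨a, m⟩ := b
    simp only [List.map_cons, List.pairwise_cons] at hl
    have hall : a ≤ p → ∀ b ∈ (a, m) :: t, Even b.2 := by
      rintro hap b (_ | ⟨_, hb⟩)
      · exact h _ List.mem_cons_self hap
      · exact h b (List.mem_cons_of_mem _ hb)
          ((hl.1 _ (List.mem_map_of_mem hb)).le.trans hap)
    simp only [insertPart]
    split_ifs with hlt hall_lt heq hall_eq
    · simp
    · exact absurd (hall hlt.le) hall_lt
    · simp
    · exact absurd (hall heq.le) hall_eq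
    · simpa using ih hl.2 fun b hb => h b (List.mem_cons_of_mem _ hb)

end BlockLists

section Coboundaries

variable {n m : ℕ} {rest : List (ℕ × ℕ)}

lemma deltaB_cons_eq_none_iff (hn : 0 < n) (hrest : (rest.map Prod.fst).Pairwise (· > ·))
    (heven : ∀ b ∈ rest, b.1 ≤ m → Even b.2) : deltaB ((n, m) :: rest) = none ↔ n ≤ m := by
  obtain ⟨l', hl'⟩ := Option.ne_none_iff_exists'.mp (insertPart_ne_none hrest heven)
  simp only [deltaB, hl']
  split_ifs <;> simp <;> omega

lemma deltaStarB_cons_eq_none_iff_of_removeLastOdd_eq_some {nt : ℕ} {rest' : List (ℕ × ℕ)}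
    (h : removeLastOdd rest = some (nt, rest')) :
    deltaStarB ((n, m) :: rest) = none ↔ m < nt := by
  simp only [deltaStarB, h]
  split_ifs <;> simp <;> omega

lemma deltaStarB_cons_eq_none_iff_of_removeLastOdd_eq_none (h : removeLastOdd rest = none) :
    deltaStarB ((n, m) :: rest) = none ↔ (n < m → Even (m - n)) := by
  simp only [deltaStarB, h]
  split_ifs <;> simp_all

lemma deltaB_eq_none_and_deltaStarB_eq_none_cons_iff (hn : 0 < n)
    (hsort : (((n, m) :: rest).map Prod.fst).Pairwise (· > ·)) :
    (deltaB ((n, m) :: rest) = none ∧ deltaStarB ((n, m) :: rest) = none) ↔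
      n ≤ m ∧ Even (m - n) ∧ ∀ b ∈ rest, Even b.2 := by
  obtain ⟨hhead, hrest⟩ := List.pairwise_cons.mp hsort
  cases hr : removeLastOdd rest with
  | none =>
    have heven := removeLastOdd_eq_none_iff.mp hr
    rw [deltaB_cons_eq_none_iff hn hrest fun b hb _ => heven b hb,
      deltaStarB_cons_eq_none_iff_of_removeLastOdd_eq_none hr]
    constructor
    · rintro ⟨hle, heven'⟩
      exact ⟨hle, (eq_or_lt_of_le hle).elim (fun h => by simp [h]) heven', heven⟩
    · rintro ⟨hle, hm, -⟩
      exact ⟨hle, fun _ => hm⟩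
  | some p =>
    obtain ⟨nt, rest'⟩ := p
    have hnt : nt < n := hhead nt (mem_map_fst_of_removeLastOdd_eq_some hr)
    have hodd : ¬ ∀ b ∈ rest, Even b.2 := fun h => by
      simp [removeLastOdd_eq_none_iff.mpr h] at hr
    refine iff_of_false ?_ fun h => hodd h.2.2
    rintro ⟨hδ, hδ'⟩
    rw [deltaStarB_cons_eq_none_iff_of_removeLastOdd_eq_some hr] at hδ'
    rw [deltaB_cons_eq_none_iff hn hrest
      fun b hb hle => even_of_removeLastOdd_eq_some hrest hr b hb (by omega)] at hδ
    omega

end Coboundaries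

/-- Harmonic characterization: a partition `σ` of `n ≥ 1` satisfies `δσ = 0` and
`δ*σ = 0` iff it has the form `((n₁)^{n₁+2s}, (n₂)^{2t₂}, …, (n_k)^{2t_k})`, i.e. the
multiplicity of the largest part exceeds the largest part by a nonnegative even number
and all other multiplicities are even. -/
theorem harmonicB_characterization (n : ℕ) (hn : 0 < n) (σ : List (ℕ × ℕ))
    (hσ : IsBlockPartition n σ) :
    (deltaB σ = none ∧ deltaStarB σ = none) ↔
      ∃ (a m : ℕ) (rest : List (ℕ × ℕ)), σ = (a, m) :: rest ∧
        a ≤ m ∧ Even (m - a) ∧ ∀ b ∈ rest, Even b.2 := by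
  obtain ⟨hsort, hpos, hsum⟩ := hσ
  obtain ⟨⟨n₁, m₁⟩, rest, rfl⟩ : ∃ b rest, σ = b :: rest := by
    cases σ with
    | nil => simp at hsum; omega
    | cons b rest => exact ⟨b, rest, rfl⟩
  simp only [List.cons.injEq, Prod.mk.injEq, and_assoc, exists_and_left, exists_eq_left']
  exact deltaB_eq_none_and_deltaStarB_eq_none_cons_iff (hpos _ List.mem_cons_self).1 hsort
end
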